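/- arXiv:2105.01932 — 2 statements merged into one kernel-verified Lean document; each statement's English description precedes it below -/
import Mathlib

section
/- Let N ≥ 1 be an integer, ρ > 0, and let α, β be real constants with α > N and 0 < β < N. Then there exists a constant C = C(N, α, β, ρ) > 0 such that for all ε ∈ (0, 1], all x, y ∈ ℝ^N, and all t > 0 satisfying |y−x|² + t² ≥ ρ², one has ∫_{ℝ^N} (t+|z|)^{−α} · (1 + |y−z−x|/ε)^{−β} dz ≤ C · ε^β · ( (1+|y−x|)^{−β} · t^{−(α−N)} + (1+|y−x|)^{−α} ). -/
/-!
Write `w = y - x` and split the integral at the ball `‖z - w‖ < r` with `r = (t + ‖w‖) / 2`.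
On this ball `t + ‖z‖ ≥ r`, so the first factor is at most `r ^ (-α)`, while the second is at most
`ε ^ β ‖z - w‖ ^ (-β)`, whose integral over the ball is `r ^ (N - β)` times a finite constant
since `β < N`. Off the ball the second factor is at most `ε ^ β r ^ (-β)`, and by scaling
`∫ (t + ‖z‖) ^ (-α) = t ^ (N - α) ∫ (1 + ‖z‖) ^ (-α)`, finite since `α > N`. As `r ≥ t / 2` and
`α > N`, both pieces are `O(ε ^ β (t + ‖w‖) ^ (-β) t ^ (N - α))`, and `t + ‖w‖ ≥ ρ` lets
`(1 + ‖w‖) ^ (-β)` replace `(t + ‖w‖) ^ (-β)`.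
-/

open MeasureTheory Set Metric Module

theorem Real.rpow_neg_le_of_le_mul {a b K e : ℝ} (ha : 0 < a) (hK : 0 < K) (he : 0 ≤ e)
    (h : a ≤ K * b) : b ^ (-e) ≤ K ^ e * a ^ (-e) := by
  have hb : 0 < b := pos_of_mul_pos_right (ha.trans_le h) hK.le
  calc b ^ (-e) = K ^ e * (K * b) ^ (-e) := by
        rw [Real.mul_rpow hK.le hb.le, Real.rpow_neg hK.le, ← mul_assoc,
          mul_inv_cancel₀ (Real.rpow_pos_of_pos hK e).ne', one_mul]
    _ ≤ K ^ e * a ^ (-e) :=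
        mul_le_mul_of_nonneg_left (Real.rpow_le_rpow_of_nonpos ha h (neg_nonpos.2 he))
          (Real.rpow_nonneg hK.le e)

theorem Real.one_add_div_rpow_neg_le {u ε β : ℝ} (hu : 0 < u) (hε : 0 < ε) (hβ : 0 ≤ β) :
    (1 + u / ε) ^ (-β) ≤ ε ^ β * u ^ (-β) :=
  calc (1 + u / ε) ^ (-β) ≤ (u / ε) ^ (-β) :=
        Real.rpow_le_rpow_of_nonpos (by positivity) (by linarith) (neg_nonpos.2 hβ)
    _ = ε ^ β * u ^ (-β) := by
        rw [Real.div_rpow hu.le hε.le, Real.rpow_neg hε.le, div_inv_eq_mul, mul_comm]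

section NormedGroup

variable {E : Type*} [NormedAddCommGroup E]

theorem add_norm_rpow_neg_mul_le {α β t ε r : ℝ} (hα : 0 ≤ α) (hβ : 0 ≤ β) (ht : 0 ≤ t)
    (hε : 0 < ε) (hr : 0 < r) {w z : E} (hrw : 2 * r ≤ t + ‖w‖) (hzw : z ≠ w) :
    (t + ‖z‖) ^ (-α) * (1 + ‖w - z‖ / ε) ^ (-β) ≤
      ε ^ β * (r ^ (-β) * (t + ‖z‖) ^ (-α) +
        r ^ (-α) * (ball (0 : E) r).indicator (fun x ↦ ‖x‖ ^ (-β)) (z - w)) := by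
  rw [norm_sub_rev]
  have hα' : -α ≤ 0 := neg_nonpos.2 hα
  have hβ' : -β ≤ 0 := neg_nonpos.2 hβ
  by_cases hball : z - w ∈ ball (0 : E) r
  · have hrz : r ≤ t + ‖z‖ := by
      linarith [mem_ball_zero_iff.1 hball, norm_sub_norm_le w z, norm_sub_rev w z]
    have hzw' : 0 < ‖z - w‖ := norm_pos_iff.2 (sub_ne_zero.2 hzw)
    rw [indicator_of_mem hball]
    have : 0 ≤ ε ^ β * (r ^ (-β) * (t + ‖z‖) ^ (-α)) := by positivity
    calc (t + ‖z‖) ^ (-α) * (1 + ‖z - w‖ / ε) ^ (-β)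
        ≤ r ^ (-α) * (ε ^ β * ‖z - w‖ ^ (-β)) :=
          mul_le_mul (Real.rpow_le_rpow_of_nonpos hr hrz hα')
            (Real.one_add_div_rpow_neg_le hzw' hε hβ) (by positivity) (by positivity)
      _ ≤ _ := by nlinarith
  · rw [indicator_of_notMem hball, mul_zero, add_zero]
    rw [mem_ball_zero_iff, not_lt] at hball
    calc (t + ‖z‖) ^ (-α) * (1 + ‖z - w‖ / ε) ^ (-β)
        ≤ (t + ‖z‖) ^ (-α) * (ε ^ β * r ^ (-β)) := by
          refine mul_le_mul_of_nonneg_left ?_ (by positivity)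
          calc (1 + ‖z - w‖ / ε) ^ (-β) ≤ (1 + r / ε) ^ (-β) :=
                Real.rpow_le_rpow_of_nonpos (by positivity) (by gcongr) hβ'
            _ ≤ ε ^ β * r ^ (-β) := Real.one_add_div_rpow_neg_le hr hε hβ
      _ = _ := by ring

theorem add_norm_rpow_neg_eq [NormedSpace ℝ E] {α t : ℝ} (ht : 0 < t) (x : E) :
    (t + ‖x‖) ^ (-α) = t ^ (-α) * (1 + ‖t⁻¹ • x‖) ^ (-α) := by
  rw [norm_smul, norm_inv, Real.norm_of_nonneg ht.le,
    show 1 + t⁻¹ * ‖x‖ = t⁻¹ * (t + ‖x‖) by field_simp,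
    Real.mul_rpow (inv_nonneg.2 ht.le) (by positivity), ← mul_assoc, Real.inv_rpow ht.le,
    Real.rpow_neg ht.le, inv_inv, inv_mul_cancel₀ (Real.rpow_pos_of_pos ht α).ne', one_mul]

end NormedGroup

section HaarMeasure

variable {E : Type*} [NormedAddCommGroup E] [NormedSpace ℝ E] [FiniteDimensional ℝ E]
  [MeasurableSpace E] [BorelSpace E] (μ : Measure E) [μ.IsAddHaarMeasure]

theorem integrable_add_norm_rpow_neg {α t : ℝ} (hα : (finrank ℝ E : ℝ) < α) (ht : 0 < t) :
    Integrable (fun x : E ↦ (t + ‖x‖) ^ (-α)) μ := by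
  simp_rw [add_norm_rpow_neg_eq ht]
  exact (((integrable_one_add_norm hα).comp_smul (inv_ne_zero ht.ne'))).const_mul _

theorem integral_add_norm_rpow_neg (α : ℝ) {t : ℝ} (ht : 0 < t) :
    ∫ x, (t + ‖x‖) ^ (-α) ∂μ = t ^ ((finrank ℝ E : ℝ) - α) * ∫ x, (1 + ‖x‖) ^ (-α) ∂μ := by
  simp_rw [add_norm_rpow_neg_eq ht]
  rw [integral_const_mul,
    Measure.integral_comp_inv_smul_of_nonneg μ (fun x ↦ (1 + ‖x‖) ^ (-α)) ht.le, smul_eq_mul,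
    ← mul_assoc, ← Real.rpow_natCast, ← Real.rpow_add ht, neg_add_eq_sub]

theorem integral_one_add_norm_rpow_neg_pos {α : ℝ} (hα : (finrank ℝ E : ℝ) < α) :
    0 < ∫ x, (1 + ‖x‖) ^ (-α) ∂μ := by
  have hpos : ∀ x : E, 0 < (1 + ‖x‖) ^ (-α) := fun x ↦ by positivity
  rw [integral_pos_iff_support_of_nonneg (fun x ↦ (hpos x).le) (integrable_one_add_norm hα),
    Function.support_eq_univ (fun x ↦ (hpos x).ne')]
  exact Measure.measure_univ_pos.2 (NeZero.ne μ)

theorem integrableOn_ball_norm_rpow_neg [Nontrivial E] {β r : ℝ} (hβ : β < finrank ℝ E)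
    (hr : 0 < r) : IntegrableOn (fun x : E ↦ ‖x‖ ^ (-β)) (ball 0 r) μ := by
  rw [integrableOn_fun_norm_addHaar μ (f := fun y ↦ y ^ (-β))]
  have hdim : 1 ≤ finrank ℝ E := finrank_pos
  refine ((intervalIntegral.integrableOn_Ioo_rpow_iff hr).2
    (?_ : -1 < ((finrank ℝ E : ℝ) - 1) + -β)).congr_fun (fun y hy ↦ ?_) measurableSet_Ioo
  · linarith
  · simp only [smul_eq_mul]
    rw [Real.rpow_add hy.1, ← Nat.cast_one, ← Nat.cast_sub hdim, Real.rpow_natCast]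

theorem setIntegral_ball_norm_rpow_neg (β : ℝ) {r : ℝ} (hr : 0 < r) :
    ∫ x in ball (0 : E) r, ‖x‖ ^ (-β) ∂μ =
      r ^ ((finrank ℝ E : ℝ) - β) * ∫ x in ball (0 : E) 1, ‖x‖ ^ (-β) ∂μ := by
  have h := Measure.setIntegral_comp_smul_of_pos μ (fun x : E ↦ ‖x‖ ^ (-β)) (ball 0 1) hr
  simp_rw [smul_unitBall_of_pos hr, norm_smul, Real.norm_of_nonneg hr.le,
    Real.mul_rpow hr.le (norm_nonneg _), integral_const_mul, smul_eq_mul] at h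
  rw [sub_eq_add_neg, Real.rpow_add hr, Real.rpow_natCast, mul_assoc, h, ← mul_assoc,
    mul_inv_cancel₀ (pow_pos hr _).ne', one_mul]

theorem exists_integral_add_norm_rpow_neg_mul_le [Nontrivial E] {α β : ℝ}
    (hα : (finrank ℝ E : ℝ) < α) (hβ0 : 0 ≤ β) (hβ : β < finrank ℝ E) :
    ∃ C, 0 < C ∧ ∀ (w : E) {t ε : ℝ}, 0 < t → 0 < ε →
      ∫ z, (t + ‖z‖) ^ (-α) * (1 + ‖w - z‖ / ε) ^ (-β) ∂μ ≤
        C * ε ^ β * (t + ‖w‖) ^ (-β) * t ^ ((finrank ℝ E : ℝ) - α) := by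
  set n : ℝ := (finrank ℝ E : ℝ)
  set A := ∫ x, (1 + ‖x‖) ^ (-α) ∂μ
  set B := ∫ x in ball (0 : E) 1, ‖x‖ ^ (-β) ∂μ
  have hA : 0 < A := integral_one_add_norm_rpow_neg_pos μ hα
  have hB : 0 ≤ B := setIntegral_nonneg measurableSet_ball fun x _ ↦ by positivity
  refine ⟨2 ^ β * (A + 2 ^ (α - n) * B), by positivity, fun w t ε ht hε ↦ ?_⟩
  set r := (t + ‖w‖) / 2
  have hr : 0 < r := by positivity
  have h2r : 2 * r = t + ‖w‖ := by simp only [r]; ring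
  set h := (ball (0 : E) r).indicator fun x ↦ ‖x‖ ^ (-β)
  have hfar : Integrable (fun z ↦ r ^ (-β) * (t + ‖z‖) ^ (-α)) μ :=
    (integrable_add_norm_rpow_neg μ hα ht).const_mul _
  have hnear : Integrable (fun z ↦ r ^ (-α) * h (z - w)) μ :=
    (((integrableOn_ball_norm_rpow_neg μ hβ hr).integrable_indicator
      measurableSet_ball).comp_sub_right w).const_mul _
  have hbound : ∀ᵐ z ∂μ, (t + ‖z‖) ^ (-α) * (1 + ‖w - z‖ / ε) ^ (-β) ≤
      ε ^ β * (r ^ (-β) * (t + ‖z‖) ^ (-α) + r ^ (-α) * h (z - w)) := by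
    filter_upwards [measure_singleton w |> compl_mem_ae_iff.2] with z hz
    exact add_norm_rpow_neg_mul_le (by linarith) hβ0 ht.le hε hr h2r.le hz
  have hr_t : r ^ (n - α) ≤ 2 ^ (α - n) * t ^ (n - α) := by
    simpa only [neg_sub] using
      Real.rpow_neg_le_of_le_mul ht two_pos (sub_nonneg.2 hα.le) (by linarith [norm_nonneg w])
  have hr_β : r ^ (-β) = 2 ^ β * (t + ‖w‖) ^ (-β) := by
    rw [Real.div_rpow (by positivity) zero_le_two, Real.rpow_neg zero_le_two, div_inv_eq_mul,
      mul_comm]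
  calc ∫ z, (t + ‖z‖) ^ (-α) * (1 + ‖w - z‖ / ε) ^ (-β) ∂μ
      ≤ ∫ z, ε ^ β * (r ^ (-β) * (t + ‖z‖) ^ (-α) + r ^ (-α) * h (z - w)) ∂μ :=
        integral_mono_of_nonneg (.of_forall fun z ↦ by positivity)
          ((hfar.add hnear).const_mul _) hbound
    _ = ε ^ β * (r ^ (-β) * (t ^ (n - α) * A) + r ^ (-α) * (r ^ (n - β) * B)) := by
        rw [integral_const_mul, integral_add hfar hnear, integral_const_mul, integral_const_mul,
          integral_sub_right_eq_self h w, integral_indicator measurableSet_ball,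
          integral_add_norm_rpow_neg μ α ht, setIntegral_ball_norm_rpow_neg μ β hr]
    _ = ε ^ β * r ^ (-β) * (A * t ^ (n - α) + B * r ^ (n - α)) := by
        rw [sub_eq_add_neg n α, sub_eq_add_neg n β, Real.rpow_add hr, Real.rpow_add hr]
        ring
    _ ≤ ε ^ β * r ^ (-β) * (A * t ^ (n - α) + B * (2 ^ (α - n) * t ^ (n - α))) := by gcongr
    _ = 2 ^ β * (A + 2 ^ (α - n) * B) * ε ^ β * (t + ‖w‖) ^ (-β) * t ^ (n - α) := by
        rw [hr_β]; ring

end HaarMeasure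

theorem stmt5_general (N : ℕ) (ρ α β : ℝ) (hρ : 0 < ρ) (hα : (N : ℝ) < α)
    (hβ0 : 0 < β) (hβ : β < N) :
    ∃ C : ℝ, 0 < C ∧ ∀ ε : ℝ, ε ∈ Set.Ioc (0 : ℝ) 1 →
      ∀ x y : EuclideanSpace ℝ (Fin N), ∀ t : ℝ, 0 < t →
      ρ ^ 2 ≤ ‖y - x‖ ^ 2 + t ^ 2 →
      (∫ z : EuclideanSpace ℝ (Fin N),
          (t + ‖z‖) ^ (-α) * (1 + ‖y - z - x‖ / ε) ^ (-β)) ≤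
        C * ε ^ β * ((1 + ‖y - x‖) ^ (-β) * t ^ (-(α - (N : ℝ))) +
          (1 + ‖y - x‖) ^ (-α)) := by
  have : Nontrivial (EuclideanSpace ℝ (Fin N)) :=
    Module.nontrivial_of_finrank_pos (R := ℝ) (by
      rw [finrank_euclideanSpace_fin]; exact_mod_cast hβ0.trans hβ)
  obtain ⟨C, hC, hbound⟩ := exists_integral_add_norm_rpow_neg_mul_le
    (volume : Measure (EuclideanSpace ℝ (Fin N))) (by simpa) hβ0.le (by simpa)
  simp only [finrank_euclideanSpace_fin] at hbound
  refine ⟨C * (ρ⁻¹ + 1) ^ β, by positivity, ?_⟩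
  rintro ε ⟨hε, -⟩ x y t ht hρt
  set d := ‖y - x‖
  have hd : ρ ≤ t + d := by nlinarith [norm_nonneg (y - x)]
  have h1d : 1 + d ≤ (ρ⁻¹ + 1) * (t + d) := by
    have : 1 ≤ ρ⁻¹ * (t + d) := by rwa [inv_mul_eq_div, one_le_div hρ]
    nlinarith
  have hd_β := Real.rpow_neg_le_of_le_mul (by positivity) (by positivity) hβ0.le h1d
  calc (∫ z, (t + ‖z‖) ^ (-α) * (1 + ‖y - z - x‖ / ε) ^ (-β))
      = ∫ z, (t + ‖z‖) ^ (-α) * (1 + ‖(y - x) - z‖ / ε) ^ (-β) := by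
        simp_rw [sub_right_comm y _ x]
    _ ≤ C * ε ^ β * (t + d) ^ (-β) * t ^ ((N : ℝ) - α) := hbound (y - x) ht hε
    _ ≤ C * ε ^ β * ((ρ⁻¹ + 1) ^ β * (1 + d) ^ (-β)) * t ^ ((N : ℝ) - α) := by gcongr
    _ = C * (ρ⁻¹ + 1) ^ β * ε ^ β * ((1 + d) ^ (-β) * t ^ (-(α - (N : ℝ)))) := by
        rw [neg_sub]; ring
    _ ≤ C * (ρ⁻¹ + 1) ^ β * ε ^ β * ((1 + d) ^ (-β) * t ^ (-(α - (N : ℝ))) +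
          (1 + d) ^ (-α)) := by
        gcongr
        exact le_add_of_nonneg_right (by positivity)

/-- Remark A.2, case `β < N`: for `α > N` and `0 < β < N`, there is `C > 0` such that
for all `ε ∈ (0,1]`, whenever `|y−x|² + t² ≥ ρ²` and `t > 0`,
`∫_{ℝ^N} (t+|z|)^{−α} (1+|y−z−x|/ε)^{−β} dz
  ≤ C ε^β ((1+|y−x|)^{−β} t^{−(α−N)} + (1+|y−x|)^{−α})`. -/
theorem stmt5 (N : ℕ) (hN : 1 ≤ N) (ρ α β : ℝ) (hρ : 0 < ρ) (hα : (N : ℝ) < α)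
    (hβ0 : 0 < β) (hβ : β < N) :
    ∃ C : ℝ, 0 < C ∧ ∀ ε : ℝ, ε ∈ Set.Ioc (0 : ℝ) 1 →
      ∀ x y : EuclideanSpace ℝ (Fin N), ∀ t : ℝ, 0 < t →
      ρ ^ 2 ≤ ‖y - x‖ ^ 2 + t ^ 2 →
      (∫ z : EuclideanSpace ℝ (Fin N),
          (t + ‖z‖) ^ (-α) * (1 + ‖y - z - x‖ / ε) ^ (-β)) ≤
        C * ε ^ β * ((1 + ‖y - x‖) ^ (-β) * t ^ (-(α - (N : ℝ))) +
          (1 + ‖y - x‖) ^ (-α)) :=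
  stmt5_general N ρ α β hρ hα hβ0 hβ
end

section
/- Let N ≥ 1 be an integer, ρ > 0, and let α, β be real constants with α > N and β > N. Then there exists a constant C = C(N, α, β, ρ) > 0 such that for all ε ∈ (0, 1], all x, y ∈ ℝ^N, and all t > 0 satisfying |y−x|² + t² ≥ ρ², one has ∫_{ℝ^N} (t+|z|)^{−α} · (1 + |y−z−x|/ε)^{−β} dz ≤ C · ( ε^β · (1+|y−x|)^{−β} · t^{−(α−N)} + ε^N · (1+|y−x|)^{−α} ). -/
/-!
After `(1 + ‖w - z‖ / ε) ^ (-β) = ε ^ β (ε + ‖w - z‖) ^ (-β)`, split pointwise: where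
`‖w - z‖ ≥ ‖z‖` the second factor is comparable to `(ε + ‖w‖ + ‖z‖) ^ (-β)`, and elsewhere
`‖z‖ ≥ ‖w‖ / 2`, so the first factor is at most `(t + ‖w‖ / 2) ^ (-α)` while the second integrates
to `ε ^ (N - β)` times a constant. In the first region, bound one factor by its supremum and
integrate the other, using `∫ (s + ‖z‖) ^ (-r) = s ^ (N - r) ∫ (1 + ‖u‖) ^ (-r)`. The condition
`‖w‖² + t² ≥ ρ²` makes `‖w‖` or `t` at least a fixed multiple of `1 + ‖w‖`, which decides which
factor to take the supremum of and turns every bound into a power of `1 + ‖w‖`.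
-/

open MeasureTheory Module

lemma one_add_div_rpow_neg (r : ℝ) {a ε : ℝ} (ha : 0 ≤ a) (hε : 0 < ε) :
    (1 + a / ε) ^ (-r) = ε ^ r * (ε + a) ^ (-r) := by
  rw [show 1 + a / ε = (ε + a) / ε by field_simp, Real.div_rpow (by positivity) hε.le,
    Real.rpow_neg hε.le]
  field_simp

lemma rpow_neg_le_mul_rpow_neg_of_mul_le {a b c r : ℝ} (hb : 0 < b) (hc : 0 < c) (hr : 0 ≤ r)
    (h : c * b ≤ a) : a ^ (-r) ≤ c ^ (-r) * b ^ (-r) := by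
  rw [← Real.mul_rpow hc.le hb.le]
  exact Real.rpow_le_rpow_of_nonpos (by positivity) h (by linarith)

lemma add_norm_rpow_neg_eq_s6 {E : Type*} [SeminormedAddCommGroup E] [NormedSpace ℝ E]
    (r : ℝ) {s : ℝ} (hs : 0 < s) (z : E) :
    (s + ‖z‖) ^ (-r) = s ^ (-r) * (1 + ‖s⁻¹ • z‖) ^ (-r) := by
  rw [norm_smul, norm_inv, Real.norm_of_nonneg hs.le, ← div_eq_inv_mul,
    one_add_div_rpow_neg r (norm_nonneg z) hs, ← mul_assoc, ← Real.rpow_add hs]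
  simp

lemma add_norm_rpow_neg_le {E : Type*} [SeminormedAddCommGroup E] {s r : ℝ} (hs : 0 < s)
    (hr : 0 ≤ r) (z : E) : (s + ‖z‖) ^ (-r) ≤ s ^ (-r) :=
  Real.rpow_le_rpow_of_nonpos hs (le_add_of_nonneg_right (norm_nonneg z)) (by linarith)

/-- Either `‖z‖ ≤ ‖w - z‖`, and then `ε + ‖w‖ + ‖z‖ ≤ 4 (ε + ‖w - z‖)`, or `‖w‖ / 2 ≤ ‖z‖`. -/
lemma add_norm_rpow_neg_mul_sub_le {E : Type*} [SeminormedAddCommGroup E] {t ε α β : ℝ}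
    (ht : 0 < t) (hε : 0 < ε) (hα : 0 ≤ α) (hβ : 0 ≤ β) (w z : E) :
    (t + ‖z‖) ^ (-α) * (ε + ‖w - z‖) ^ (-β) ≤
      4 ^ β * ((t + ‖z‖) ^ (-α) * (ε + ‖w‖ + ‖z‖) ^ (-β)) +
        (t + ‖w‖ / 2) ^ (-α) * (ε + ‖w - z‖) ^ (-β) := by
  have htri := norm_sub_norm_le w z
  have hz := norm_nonneg z
  rcases le_total ‖z‖ ‖w - z‖ with hzw | hzw
  · have h : (ε + ‖w - z‖) ^ (-β) ≤ 4 ^ β * (ε + ‖w‖ + ‖z‖) ^ (-β) := by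
      have := rpow_neg_le_mul_rpow_neg_of_mul_le (a := ε + ‖w - z‖) (c := 4⁻¹)
        (by positivity : 0 < ε + ‖w‖ + ‖z‖) (by norm_num) hβ (by linarith)
      rwa [Real.inv_rpow (by norm_num), ← Real.rpow_neg (by norm_num), neg_neg] at this
    calc (t + ‖z‖) ^ (-α) * (ε + ‖w - z‖) ^ (-β)
        ≤ (t + ‖z‖) ^ (-α) * (4 ^ β * (ε + ‖w‖ + ‖z‖) ^ (-β)) := by gcongr
      _ ≤ _ := by
        rw [mul_left_comm]
        exact le_add_of_nonneg_right (by positivity)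
  · have h : (t + ‖z‖) ^ (-α) ≤ (t + ‖w‖ / 2) ^ (-α) :=
      Real.rpow_le_rpow_of_nonpos (by positivity) (by linarith) (by linarith)
    calc (t + ‖z‖) ^ (-α) * (ε + ‖w - z‖) ^ (-β)
        ≤ (t + ‖w‖ / 2) ^ (-α) * (ε + ‖w - z‖) ^ (-β) := by gcongr
      _ ≤ _ := le_add_of_nonneg_left (by positivity)

lemma integral_mul_le_mul_integral {X : Type*} [MeasurableSpace X] {μ : Measure X}
    {f g : X → ℝ} {M : ℝ} (hfg : Integrable (fun x => f x * g x) μ) (hg : Integrable g μ)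
    (hg0 : ∀ x, 0 ≤ g x) (hf : ∀ x, f x ≤ M) : ∫ x, f x * g x ∂μ ≤ M * ∫ x, g x ∂μ := by
  rw [← integral_const_mul]
  exact integral_mono hfg (hg.const_mul M) fun x => mul_le_mul_of_nonneg_right (hf x) (hg0 x)

lemma exists_mul_one_add_le {ρ : ℝ} (hρ : 0 < ρ) :
    ∃ c > 0, ∀ a t : ℝ, 0 ≤ a → 0 ≤ t → ρ ^ 2 ≤ a ^ 2 + t ^ 2 →
      c * (1 + a) ≤ a / 2 ∨ c * (1 + a) ≤ t := by
  refine ⟨min ρ 1 / 8, by positivity, fun a t ha ht h => ?_⟩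
  have hρat : ρ ≤ a + t := by nlinarith
  have h1 : min ρ 1 ≤ ρ := min_le_left _ _
  have h2 : min ρ 1 ≤ 1 := min_le_right _ _
  have h3 : min ρ 1 * a ≤ a := mul_le_of_le_one_left ha h2
  rcases le_total (ρ / 2) a with hρa | hρa
  · left; nlinarith
  · right; nlinarith

lemma MeasureTheory.Integrable.add_norm_rpow_neg_mul {E : Type*} [NormedAddCommGroup E]
    [MeasurableSpace E] [BorelSpace E] {μ : Measure E} {g : E → ℝ} (hg : Integrable g μ) {t α : ℝ}
    (ht : 0 < t) (hα : 0 ≤ α) : Integrable (fun z => (t + ‖z‖) ^ (-α) * g z) μ :=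
  hg.bdd_mul (c := t ^ (-α))
    (by fun_prop : Measurable fun z : E => (t + ‖z‖) ^ (-α)).aestronglyMeasurable
    (.of_forall fun z => by
      rw [Real.norm_of_nonneg (by positivity)]
      exact add_norm_rpow_neg_le ht hα z)

section HaarMeasure

variable {E : Type*} [NormedAddCommGroup E] [NormedSpace ℝ E] [FiniteDimensional ℝ E]
  [MeasurableSpace E] [BorelSpace E] {μ : Measure E} [μ.IsAddHaarMeasure]

lemma integrable_add_norm_rpow_neg_s6 {s r : ℝ} (hs : 0 < s) (hr : (finrank ℝ E : ℝ) < r) :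
    Integrable (fun z : E => (s + ‖z‖) ^ (-r)) μ := by
  simp_rw [add_norm_rpow_neg_eq_s6 r hs]
  exact ((integrable_one_add_norm hr).comp_smul (inv_ne_zero hs.ne')).const_mul _

lemma integral_add_norm_rpow_neg_s6 (r : ℝ) {s : ℝ} (hs : 0 < s) :
    ∫ z, (s + ‖z‖) ^ (-r) ∂μ = s ^ ((finrank ℝ E : ℝ) - r) * ∫ u : E, (1 + ‖u‖) ^ (-r) ∂μ := by
  simp_rw [add_norm_rpow_neg_eq_s6 r hs]
  rw [integral_const_mul, Measure.integral_comp_inv_smul_of_nonneg μ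
    (fun u : E => (1 + ‖u‖) ^ (-r)) hs.le, smul_eq_mul, ← mul_assoc, sub_eq_neg_add,
    Real.rpow_add hs, Real.rpow_natCast]

variable {t ε α β : ℝ}

lemma integral_add_norm_rpow_neg_mul_sub_le (ht : 0 < t) (hε : 0 < ε) (hα : 0 ≤ α)
    (hβ : (finrank ℝ E : ℝ) < β) (w : E) :
    ∫ z, (t + ‖z‖) ^ (-α) * (ε + ‖w - z‖) ^ (-β) ∂μ ≤
      4 ^ β * ∫ z, (t + ‖z‖) ^ (-α) * (ε + ‖w‖ + ‖z‖) ^ (-β) ∂μ +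
        (t + ‖w‖ / 2) ^ (-α) * (ε ^ ((finrank ℝ E : ℝ) - β) * ∫ u : E, (1 + ‖u‖) ^ (-β) ∂μ) := by
  have hβ0 : 0 ≤ β := (Nat.cast_nonneg _).trans hβ.le
  have hnear := (integrable_add_norm_rpow_neg_s6 (μ := μ) (by positivity : 0 < ε + ‖w‖) hβ)
    |>.add_norm_rpow_neg_mul ht hα
  have hfar := ((integrable_add_norm_rpow_neg_s6 (μ := μ) hε hβ).comp_sub_left w).const_mul
    ((t + ‖w‖ / 2) ^ (-α))
  rw [← integral_add_norm_rpow_neg_s6 β hε,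
    ← integral_sub_left_eq_self (fun z : E => (ε + ‖z‖) ^ (-β)) μ w,
    ← integral_const_mul, ← integral_const_mul, ← integral_add (hnear.const_mul _) hfar]
  have hlhs := ((integrable_add_norm_rpow_neg_s6 (μ := μ) hε hβ).comp_sub_left w)
    |>.add_norm_rpow_neg_mul ht hα
  exact integral_mono hlhs ((hnear.const_mul _).add hfar) fun z =>
    add_norm_rpow_neg_mul_sub_le ht hε hα hβ0 w z

lemma integral_add_norm_rpow_neg_mul_add_norm_le (ht : 0 < t) (hε : 0 < ε)
    (hα : (finrank ℝ E : ℝ) < α) (hβ : (finrank ℝ E : ℝ) < β) {c : ℝ} (hc : 0 < c) (w : E)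
    (hcw : c * (1 + ‖w‖) ≤ ‖w‖ / 2 ∨ c * (1 + ‖w‖) ≤ t) :
    ∫ z, (t + ‖z‖) ^ (-α) * (ε + ‖w‖ + ‖z‖) ^ (-β) ∂μ ≤
      c ^ (-β) * (1 + ‖w‖) ^ (-β) *
          (t ^ ((finrank ℝ E : ℝ) - α) * ∫ u : E, (1 + ‖u‖) ^ (-α) ∂μ) +
        c ^ (-α) * (1 + ‖w‖) ^ (-α) *
          (ε ^ ((finrank ℝ E : ℝ) - β) * ∫ u : E, (1 + ‖u‖) ^ (-β) ∂μ) := by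
  have hα0 : 0 ≤ α := (Nat.cast_nonneg _).trans hα.le
  have hβ0 : 0 ≤ β := (Nat.cast_nonneg _).trans hβ.le
  have hs : 0 < ε + ‖w‖ := by positivity
  have hnear := (integrable_add_norm_rpow_neg_s6 (μ := μ) hs hβ).add_norm_rpow_neg_mul ht hα0
  have hJα : 0 ≤ ∫ u : E, (1 + ‖u‖) ^ (-α) ∂μ := integral_nonneg fun u => by positivity
  have hJβ : 0 ≤ ∫ u : E, (1 + ‖u‖) ^ (-β) ∂μ := integral_nonneg fun u => by positivity
  rcases hcw with hfar | hclose
  · calc ∫ z, (t + ‖z‖) ^ (-α) * (ε + ‖w‖ + ‖z‖) ^ (-β) ∂μ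
        ≤ (ε + ‖w‖) ^ (-β) * ∫ z, (t + ‖z‖) ^ (-α) ∂μ := by
          simp_rw [mul_comm ((t + ‖_‖) ^ (-α))] at hnear ⊢
          exact integral_mul_le_mul_integral hnear (integrable_add_norm_rpow_neg_s6 ht hα)
            (fun z => by positivity) (add_norm_rpow_neg_le hs hβ0)
      _ ≤ c ^ (-β) * (1 + ‖w‖) ^ (-β) *
          (t ^ ((finrank ℝ E : ℝ) - α) * ∫ u : E, (1 + ‖u‖) ^ (-α) ∂μ) := by
          rw [integral_add_norm_rpow_neg_s6 α ht]
          gcongr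
          exact rpow_neg_le_mul_rpow_neg_of_mul_le (by positivity) hc hβ0 (by linarith)
      _ ≤ _ := le_add_of_nonneg_right (by positivity)
  · calc ∫ z, (t + ‖z‖) ^ (-α) * (ε + ‖w‖ + ‖z‖) ^ (-β) ∂μ
        ≤ t ^ (-α) * ∫ z, (ε + ‖w‖ + ‖z‖) ^ (-β) ∂μ :=
          integral_mul_le_mul_integral hnear (integrable_add_norm_rpow_neg_s6 hs hβ)
            (fun z => by positivity) (add_norm_rpow_neg_le ht hα0)
      _ ≤ c ^ (-α) * (1 + ‖w‖) ^ (-α) *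
          (ε ^ ((finrank ℝ E : ℝ) - β) * ∫ u : E, (1 + ‖u‖) ^ (-β) ∂μ) := by
          rw [integral_add_norm_rpow_neg_s6 β hs]
          refine mul_le_mul (rpow_neg_le_mul_rpow_neg_of_mul_le (by positivity) hc hα0 hclose)
            (mul_le_mul_of_nonneg_right ?_ hJβ) (by positivity) (by positivity)
          exact Real.rpow_le_rpow_of_nonpos hε (by simp) (by linarith)
      _ ≤ _ := le_add_of_nonneg_left (by positivity)

theorem exists_integral_add_norm_rpow_neg_mul_one_add_div_le {ρ : ℝ} (hρ : 0 < ρ)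
    (hα : (finrank ℝ E : ℝ) < α) (hβ : (finrank ℝ E : ℝ) < β) :
    ∃ C > 0, ∀ ε > 0, ∀ w : E, ∀ t > 0, ρ ^ 2 ≤ ‖w‖ ^ 2 + t ^ 2 →
      ∫ z, (t + ‖z‖) ^ (-α) * (1 + ‖w - z‖ / ε) ^ (-β) ∂μ ≤
        C * (ε ^ β * (1 + ‖w‖) ^ (-β) * t ^ (-(α - finrank ℝ E)) +
          ε ^ (finrank ℝ E : ℝ) * (1 + ‖w‖) ^ (-α)) := by
  set d : ℝ := (finrank ℝ E : ℝ)
  set Jα := ∫ u : E, (1 + ‖u‖) ^ (-α) ∂μ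
  set Jβ := ∫ u : E, (1 + ‖u‖) ^ (-β) ∂μ
  have hα0 : 0 ≤ α := (Nat.cast_nonneg _).trans hα.le
  have hJα : 0 ≤ Jα := integral_nonneg fun u => by positivity
  have hJβ : 0 ≤ Jβ := integral_nonneg fun u => by positivity
  obtain ⟨c, hc, hregime⟩ := exists_mul_one_add_le hρ
  set C₁ := 4 ^ β * c ^ (-β) * Jα
  set C₂ := (4 ^ β + 1) * c ^ (-α) * Jβ
  refine ⟨C₁ + C₂ + 1, by positivity, fun ε hε w t ht hwt => ?_⟩
  set T₁ := ε ^ β * (1 + ‖w‖) ^ (-β) * t ^ (-(α - d))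
  set T₂ := ε ^ d * (1 + ‖w‖) ^ (-α)
  have hcw := hregime ‖w‖ t (norm_nonneg w) ht.le hwt
  have hmid : c * (1 + ‖w‖) ≤ t + ‖w‖ / 2 := by
    rcases hcw with h | h <;> linarith [norm_nonneg w]
  have hεd : ε ^ β * ε ^ (d - β) = ε ^ d := by rw [← Real.rpow_add hε]; ring_nf
  calc ∫ z, (t + ‖z‖) ^ (-α) * (1 + ‖w - z‖ / ε) ^ (-β) ∂μ
      = ε ^ β * ∫ z, (t + ‖z‖) ^ (-α) * (ε + ‖w - z‖) ^ (-β) ∂μ := by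
        simp_rw [one_add_div_rpow_neg β (norm_nonneg _) hε, mul_left_comm _ (ε ^ β)]
        exact integral_const_mul _ _
    _ ≤ ε ^ β * (4 ^ β * (c ^ (-β) * (1 + ‖w‖) ^ (-β) * (t ^ (d - α) * Jα) +
          c ^ (-α) * (1 + ‖w‖) ^ (-α) * (ε ^ (d - β) * Jβ)) +
          c ^ (-α) * (1 + ‖w‖) ^ (-α) * (ε ^ (d - β) * Jβ)) := by
        gcongr
        refine (integral_add_norm_rpow_neg_mul_sub_le ht hε hα0 hβ w).trans ?_
        gcongr
        · exact integral_add_norm_rpow_neg_mul_add_norm_le ht hε hα hβ hc w hcw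
        · exact rpow_neg_le_mul_rpow_neg_of_mul_le (by positivity) hc hα0 hmid
    _ = C₁ * T₁ + C₂ * T₂ := by
        simp only [C₁, C₂, T₁, T₂, neg_sub, ← hεd]
        ring
    _ ≤ (C₁ + C₂ + 1) * (T₁ + T₂) := by
        have : 0 ≤ C₁ * T₂ + C₂ * T₁ + T₁ + T₂ := by positivity
        linarith

end HaarMeasure

theorem stmt6_general (N : ℕ) (ρ α β : ℝ) (hρ : 0 < ρ) (hα : (N : ℝ) < α)
    (hβ : (N : ℝ) < β) :
    ∃ C : ℝ, 0 < C ∧ ∀ ε : ℝ, ε ∈ Set.Ioc (0 : ℝ) 1 →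
      ∀ x y : EuclideanSpace ℝ (Fin N), ∀ t : ℝ, 0 < t →
      ρ ^ 2 ≤ ‖y - x‖ ^ 2 + t ^ 2 →
      (∫ z : EuclideanSpace ℝ (Fin N),
          (t + ‖z‖) ^ (-α) * (1 + ‖y - z - x‖ / ε) ^ (-β)) ≤
        C * (ε ^ β * (1 + ‖y - x‖) ^ (-β) * t ^ (-(α - (N : ℝ))) +
          ε ^ (N : ℝ) * (1 + ‖y - x‖) ^ (-α)) := by
  obtain ⟨C, hC, hbound⟩ := exists_integral_add_norm_rpow_neg_mul_one_add_div_le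
    (E := EuclideanSpace ℝ (Fin N)) (μ := volume) hρ (by simpa using hα) (by simpa using hβ)
  refine ⟨C, hC, fun ε hε x y t ht hyx => ?_⟩
  simpa only [finrank_euclideanSpace_fin, sub_right_comm y _ x] using
    hbound ε hε.1 (y - x) t ht hyx

/-- Remark A.2, case `β > N`: for `α > N` and `β > N`, there is `C > 0` such that
for all `ε ∈ (0,1]`, whenever `|y−x|² + t² ≥ ρ²` and `t > 0`,
`∫_{ℝ^N} (t+|z|)^{−α} (1+|y−z−x|/ε)^{−β} dz
  ≤ C (ε^β (1+|y−x|)^{−β} t^{−(α−N)} + ε^N (1+|y−x|)^{−α})`. -/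
theorem stmt6 (N : ℕ) (hN : 1 ≤ N) (ρ α β : ℝ) (hρ : 0 < ρ) (hα : (N : ℝ) < α)
    (hβ : (N : ℝ) < β) :
    ∃ C : ℝ, 0 < C ∧ ∀ ε : ℝ, ε ∈ Set.Ioc (0 : ℝ) 1 →
      ∀ x y : EuclideanSpace ℝ (Fin N), ∀ t : ℝ, 0 < t →
      ρ ^ 2 ≤ ‖y - x‖ ^ 2 + t ^ 2 →
      (∫ z : EuclideanSpace ℝ (Fin N),
          (t + ‖z‖) ^ (-α) * (1 + ‖y - z - x‖ / ε) ^ (-β)) ≤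
        C * (ε ^ β * (1 + ‖y - x‖) ^ (-β) * t ^ (-(α - (N : ℝ))) +
          ε ^ (N : ℝ) * (1 + ‖y - x‖) ^ (-α)) :=
  stmt6_general N ρ α β hρ hα hβ
end
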